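/- Face areas of a null-faced 4-parallelotope from scalar products of volume normals: let a, b, c, d be a basis of ℝ⁴, M the matrix with columns a, b, c, d, and for each i let ℓᵢ ∈ ℝ⁴ satisfy η(ℓᵢ, v) = det(M with i-th column replaced by v) for all v. If η(ℓ₁,ℓ₁) = 0 and η(ℓ₂,ℓ₂) = 0 (the corresponding two hyperfaces are null), then η(ℓ₁,ℓ₂)² = (det M)² · (η(c,c)η(d,d) − η(c,d)²). In words, |η(ℓ₁,ℓ₂)| equals the spacetime volume Ω = |det M| times the area of the parallelogram face spanned by c and d at which the two hyperfaces intersect. -/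

import Mathlib

/-!
Writing `J = diag(-1, 1, 1, 1)` and `M` for the matrix with columns `a, b, c, d`, Cramer's rule
says that the matrix `L` with rows `ℓᵢ` satisfies `L J = adj M`. Hence the Gram matrix of the
`ℓᵢ` is `adj M · J · (adj M)ᵀ = -adj (Mᵀ J M)`, minus the adjugate of the Gram matrix `G` of
`a, b, c, d`. The Desnanot–Jacobi identity
`adj G₀₀ · adj G₁₁ - adj G₀₁ · adj G₁₀ = det G · (G₂₂ G₃₃ - G₂₃ G₃₂)`, together with
`det G = -(det M)²` and the nullity of `ℓ₁, ℓ₂`, gives the claim.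
-/

/-- The Minkowski bilinear form on `ℝ⁴` with signature `(-,+,+,+)`. -/
def eta (x y : Fin 4 → ℝ) : ℝ :=
  -(x 0 * y 0) + x 1 * y 1 + x 2 * y 2 + x 3 * y 3

/-- The 4×4 matrix whose columns are the vectors `e 0, e 1, e 2, e 3`. -/
def cols (e : Fin 4 → Fin 4 → ℝ) : Matrix (Fin 4) (Fin 4) ℝ :=
  Matrix.of fun i j => e j i

open Matrix

theorem Matrix.desnanot_jacobi_fin_four {R : Type*} [CommRing R] (A : Matrix (Fin 4) (Fin 4) R) :
    A.adjugate 0 0 * A.adjugate 1 1 - A.adjugate 0 1 * A.adjugate 1 0 =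
      A.det * (A 2 2 * A 3 3 - A 2 3 * A 3 2) := by
  simp only [adjugate_fin_succ_eq_det_submatrix, det_fin_three, det_succ_row_zero (n := 3),
    Fin.sum_univ_four, submatrix_apply, Fin.succAbove, Fin.lt_def, Fin.reduceSucc,
    Fin.reduceCastSucc, Fin.isValue, Fin.val_zero, Fin.val_one, Fin.val_two]
  norm_num
  ring

def etaMatrix : Matrix (Fin 4) (Fin 4) ℝ :=
  diagonal ![-1, 1, 1, 1]

def etaGram (v : Fin 4 → Fin 4 → ℝ) : Matrix (Fin 4) (Fin 4) ℝ :=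
  of fun i j => eta (v i) (v j)

@[simp]
lemma etaGram_apply (v : Fin 4 → Fin 4 → ℝ) (i j : Fin 4) : etaGram v i j = eta (v i) (v j) :=
  rfl

lemma eta_eq_dotProduct_mulVec (x y : Fin 4 → ℝ) : eta x y = x ⬝ᵥ (etaMatrix *ᵥ y) := by
  simp [eta, etaMatrix, dotProduct, Fin.sum_univ_four, mulVec_diagonal]

lemma eta_comm (x y : Fin 4 → ℝ) : eta x y = eta y x := by
  simp only [eta]
  ring

lemma etaMatrix_transpose : etaMatrixᵀ = etaMatrix :=
  diagonal_transpose _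

lemma etaMatrix_mul_self : etaMatrix * etaMatrix = 1 := by
  rw [etaMatrix, diagonal_mul_diagonal, ← diagonal_one]
  congr 1
  ext i
  fin_cases i <;> norm_num

lemma det_etaMatrix : etaMatrix.det = -1 := by
  simp [etaMatrix, det_diagonal, Fin.prod_univ_four]

lemma adjugate_etaMatrix : etaMatrix.adjugate = -etaMatrix := by
  calc etaMatrix.adjugate = etaMatrix * etaMatrix * etaMatrix.adjugate := by
        rw [etaMatrix_mul_self, Matrix.one_mul]
    _ = -etaMatrix := by
        rw [Matrix.mul_assoc, mul_adjugate, det_etaMatrix, neg_one_smul, Matrix.mul_neg,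
          Matrix.mul_one]

lemma cols_eq_transpose (e : Fin 4 → Fin 4 → ℝ) : cols e = (of e)ᵀ :=
  rfl

lemma etaGram_eq (v : Fin 4 → Fin 4 → ℝ) : etaGram v = of v * etaMatrix * (of v)ᵀ := by
  ext i j
  simp [etaGram, eta, etaMatrix, mul_apply, Fin.sum_univ_four]

lemma det_etaGram (e : Fin 4 → Fin 4 → ℝ) : (etaGram e).det = -(cols e).det ^ 2 := by
  rw [etaGram_eq, det_mul, det_mul, det_etaMatrix, cols_eq_transpose, det_transpose]
  ring

lemma of_mul_etaMatrix_eq_adjugate {e ℓ : Fin 4 → Fin 4 → ℝ}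
    (hℓ : ∀ i v, eta (ℓ i) v = ((cols e).updateCol i v).det) :
    of ℓ * etaMatrix = (cols e).adjugate := by
  ext i k
  have h := hℓ i (Pi.single k 1)
  rw [← cramer_apply, cramer_eq_adjugate_mulVec, mulVec_single_one, eta_eq_dotProduct_mulVec,
    mulVec_single_one] at h
  exact h

lemma etaGram_eq_neg_adjugate {e ℓ : Fin 4 → Fin 4 → ℝ}
    (hℓ : ∀ i v, eta (ℓ i) v = ((cols e).updateCol i v).det) :
    etaGram ℓ = -(etaGram e).adjugate := by
  have hL := of_mul_etaMatrix_eq_adjugate hℓ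
  calc etaGram ℓ = (of ℓ * etaMatrix) * etaMatrix * (of ℓ * etaMatrix)ᵀ := by
        rw [etaGram_eq, transpose_mul, etaMatrix_transpose, Matrix.mul_assoc (of ℓ * etaMatrix),
          ← Matrix.mul_assoc etaMatrix etaMatrix, etaMatrix_mul_self, Matrix.one_mul]
    _ = -(etaGram e).adjugate := by
        rw [hL, etaGram_eq, ← cols_eq_transpose, adjugate_mul_distrib, adjugate_mul_distrib,
          adjugate_etaMatrix, adjugate_transpose, cols_eq_transpose, transpose_transpose]
        simp only [Matrix.neg_mul, Matrix.mul_neg, neg_neg, Matrix.mul_assoc]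

theorem nullFaced_parallelotope_face_area_general (a b c d : Fin 4 → ℝ)
    (ℓ : Fin 4 → Fin 4 → ℝ)
    (hℓ : ∀ i v, eta (ℓ i) v = ((cols ![a, b, c, d]).updateCol i v).det)
    (h1 : eta (ℓ 0) (ℓ 0) = 0) (h2 : eta (ℓ 1) (ℓ 1) = 0) :
    eta (ℓ 0) (ℓ 1) ^ 2 =
      (cols ![a, b, c, d]).det ^ 2 * (eta c c * eta d d - eta c d ^ 2) ∧
    |eta (ℓ 0) (ℓ 1)| =
      |(cols ![a, b, c, d]).det| * Real.sqrt (eta c c * eta d d - eta c d ^ 2) := by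
  have hadj : ∀ i j, (etaGram ![a, b, c, d]).adjugate i j = -eta (ℓ i) (ℓ j) := fun i j => by
    have hΛ : eta (ℓ i) (ℓ j) = -(etaGram ![a, b, c, d]).adjugate i j :=
      congrFun (congrFun (etaGram_eq_neg_adjugate hℓ) i) j
    rw [hΛ, neg_neg]
  have jacobi := desnanot_jacobi_fin_four (etaGram ![a, b, c, d])
  rw [hadj, hadj, hadj, hadj, h1, h2, eta_comm (ℓ 1) (ℓ 0), det_etaGram] at jacobi
  simp only [etaGram_apply, Matrix.cons_val, eta_comm d c] at jacobi
  have hsq : eta (ℓ 0) (ℓ 1) ^ 2 =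
      (cols ![a, b, c, d]).det ^ 2 * (eta c c * eta d d - eta c d ^ 2) := by
    linear_combination -jacobi
  refine ⟨hsq, ?_⟩
  rw [← Real.sqrt_sq_eq_abs, hsq, Real.sqrt_mul (sq_nonneg _), Real.sqrt_sq_eq_abs]

/-- Face areas of a null-faced 4-parallelotope from scalar products of volume
normals: if the hyperfaces spanned by `{b,c,d}` and `{a,c,d}` are null (their
volume normals `ℓ₁ = ℓ 0`, `ℓ₂ = ℓ 1` are null vectors), then
`η(ℓ₁,ℓ₂)² = (det M)²·(η(c,c)η(d,d) − η(c,d)²)`; i.e. `|η(ℓ₁,ℓ₂)|` equals the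
volume `Ω = |det M|` times the area of the parallelogram face spanned by `c, d`. -/
theorem nullFaced_parallelotope_face_area (a b c d : Fin 4 → ℝ)
    (hbasis : LinearIndependent ℝ ![a, b, c, d])
    (ℓ : Fin 4 → Fin 4 → ℝ)
    (hℓ : ∀ i v, eta (ℓ i) v = ((cols ![a, b, c, d]).updateCol i v).det)
    (h1 : eta (ℓ 0) (ℓ 0) = 0) (h2 : eta (ℓ 1) (ℓ 1) = 0) :
    eta (ℓ 0) (ℓ 1) ^ 2 =
      (cols ![a, b, c, d]).det ^ 2 * (eta c c * eta d d - eta c d ^ 2) ∧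
    |eta (ℓ 0) (ℓ 1)| =
      |(cols ![a, b, c, d]).det| * Real.sqrt (eta c c * eta d d - eta c d ^ 2) :=
  nullFaced_parallelotope_face_area_general a b c d ℓ hℓ h1 h2
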